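/- Let β : U → ℝ be continuously differentiable and define the Hamiltonian H := p_t + Ψ + (r − r_s/2)·β on U. Let I ⊆ ℝ be an interval containing 0 and let γ = (t, r, θ, φ, p_t, p_r, p_θ, p_φ) : I → U be a differentiable curve solving Hamilton's equations dq^μ/ds = ∂H/∂p_μ and dp_μ/ds = −∂H/∂q^μ (μ ∈ {t,r,θ,φ}), with r(0) = r_s/2. Then for all s ∈ I: r(s) = r_s/2, θ(s) = θ(0), t(s) = t(0) + s, φ(s) = φ(0) + (c/r_s)·s, p_t(s) = p_t(0), p_θ(s) = p_θ(0), and p_φ(s) = p_φ(0). In particular, if additionally p_t(0) + (c/r_s)·p_φ(0) = 0, then γ(s) remains in the double characteristic manifold Σ₂ for all s: the bicharacteristic curves on the extremal horizon orbit at the constant angular velocity c/r_s while only the radial momentum p_r(s) varies. -/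

import Mathlib

/-!
On the horizon `r = r_s / 2` the coefficient of `p_φ` in `Ψ` equals `c / r_s` and the `β`-term
vanishes, so along every coordinate line through a horizon point other than the `r`-line, `H`
agrees with the linear function `p_t + (c / r_s) p_φ`. The radial equation
`ṙ = ∂H/∂p_r = (r - r_s / 2) ∂β/∂p_r` is a linear equation for `r - r_s / 2` whose
coefficient is continuous (`β` is `C¹` and the curve stays in the chart), so Grönwall's inequality forces
`r ≡ r_s / 2`. The remaining Hamilton equations then have constant right-hand sides.
-/

noncomputable section

/-- Partial derivative of a function on phase space ℝ⁸ with respect to the i-th variable.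
Coordinates: x 0 = t, x 1 = r, x 2 = θ, x 3 = φ, x 4 = p_t, x 5 = p_r, x 6 = p_θ, x 7 = p_φ. -/
def pd (i : Fin 8) (f : (Fin 8 → ℝ) → ℝ) (x : Fin 8 → ℝ) : ℝ :=
  deriv (fun s => f (Function.update x i s)) (x i)

/-- Σ = r² + (r_s²/4)·cos²θ -/
def Sig (rs r th : ℝ) : ℝ := r ^ 2 + rs ^ 2 / 4 * Real.cos th ^ 2

/-- D = r² + r_s²/4 + (r_s·r/Σ)·(r_s²/4)·sin²θ -/
def Dfun (rs r th : ℝ) : ℝ :=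
  r ^ 2 + rs ^ 2 / 4 + rs * r / Sig rs r th * (rs ^ 2 / 4) * Real.sin th ^ 2

/-- Ψ = ((r_s·c/2)·(r_s·r/Σ)/D)·p_φ as a function on phase space. -/
def Psiv (rs c : ℝ) (x : Fin 8 → ℝ) : ℝ :=
  rs * c / 2 * (rs * x 1 / Sig rs (x 1) (x 2)) / Dfun rs (x 1) (x 2) * x 7

/-- The Hamiltonian H = p_t + Ψ + (r − r_s/2)·β. -/
def Ham (rs c : ℝ) (β : (Fin 8 → ℝ) → ℝ) (x : Fin 8 → ℝ) : ℝ :=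
  x 4 + Psiv rs c x + (x 1 - rs / 2) * β x

/-- The Boyer–Lindquist phase-space chart U = {r > 0, sin θ ≠ 0}. -/
def chartU : Set (Fin 8 → ℝ) := {x | 0 < x 1 ∧ Real.sin (x 2) ≠ 0}

open Set Function

lemma isOpen_chartU : IsOpen chartU :=
  (isOpen_lt continuous_const (continuous_apply 1)).inter
    (isOpen_ne_fun (Real.continuous_sin.comp (continuous_apply 2)) continuous_const)

section PartialDerivative

variable {f g : (Fin 8 → ℝ) → ℝ} {x : Fin 8 → ℝ} {i : Fin 8}

lemma pd_congr_line (h : ∀ s, f (update x i s) = g (update x i s)) :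
    pd i f x = pd i g x := by
  simp only [pd, h]

lemma pd_eq_fderiv (hf : DifferentiableAt ℝ f x) : pd i f x = fderiv ℝ f x (Pi.single i 1) := by
  have hf' : HasFDerivAt f (fderiv ℝ f x) (update x i (x i)) := by
    rw [update_eq_self]; exact hf.hasFDerivAt
  exact (hf'.comp_hasDerivAt (x i) (hasDerivAt_update x i (x i))).deriv

lemma pd_continuousLinearMap (ℓ : (Fin 8 → ℝ) →L[ℝ] ℝ) : pd i ℓ x = ℓ (Pi.single i 1) := by
  rw [pd_eq_fderiv ℓ.differentiableAt, ℓ.fderiv]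

end PartialDerivative

section Horizon

variable {rs c : ℝ} {β : (Fin 8 → ℝ) → ℝ} {x : Fin 8 → ℝ}

lemma psiv_of_horizon (hrs : rs ≠ 0) (hx : x 1 = rs / 2) : Psiv rs c x = c / rs * x 7 := by
  have hcos : 0 < 1 + Real.cos (x 2) ^ 2 := by positivity
  have hsin : Real.sin (x 2) ^ 2 = 1 - Real.cos (x 2) ^ 2 := by
    linarith [Real.sin_sq_add_cos_sq (x 2)]
  simp only [Psiv, Dfun, Sig, hx, hsin]
  field_simp
  ring

def horizonHamiltonian (rs c : ℝ) : (Fin 8 → ℝ) →L[ℝ] ℝ :=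
  ContinuousLinearMap.proj 4 + (c / rs) • ContinuousLinearMap.proj 7

@[simp]
lemma horizonHamiltonian_apply (y : Fin 8 → ℝ) :
    horizonHamiltonian rs c y = y 4 + c / rs * y 7 :=
  rfl

lemma ham_of_horizon (hrs : rs ≠ 0) (hx : x 1 = rs / 2) :
    Ham rs c β x = horizonHamiltonian rs c x := by
  simp [Ham, psiv_of_horizon hrs hx, hx]

lemma pd_ham_of_horizon (hrs : rs ≠ 0) (hx : x 1 = rs / 2) {i : Fin 8} (hi : i ≠ 1) :
    pd i (Ham rs c β) x = horizonHamiltonian rs c (Pi.single i 1) := by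
  rw [← pd_continuousLinearMap]
  refine pd_congr_line fun s => ham_of_horizon hrs ?_
  rwa [update_of_ne hi.symm]

lemma pd_five_ham (hβ : DifferentiableAt ℝ β x) :
    pd 5 (Ham rs c β) x = (x 1 - rs / 2) * fderiv ℝ β x (Pi.single 5 1) := by
  rw [pd_congr_line (g := fun y => x 4 + Psiv rs c x + (x 1 - rs / 2) * β y) fun s => by
      simp [Ham, Psiv, update_of_ne], pd_eq_fderiv (by fun_prop), fderiv_const_add,
    fderiv_const_mul hβ]
  rfl

end Horizon

section LinearODE

variable {I : Set ℝ} {f g : ℝ → ℝ} {t₀ : ℝ}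

lemma eqOn_zero_Icc_of_hasDerivAt_mul {a b : ℝ} (hg : ContinuousOn g (Icc a b))
    (hf : ∀ t ∈ Icc a b, HasDerivAt f (f t * g t) t) (ha : f a = 0) : EqOn f 0 (Icc a b) := by
  obtain ⟨K, hK⟩ := isCompact_Icc.exists_bound_of_continuousOn hg
  refine eq_zero_of_abs_deriv_le_mul_abs_self_of_eq_zero_right (K := K)
    (fun t ht => (hf t ht).continuousAt.continuousWithinAt)
    (fun t ht => (hf t (Ico_subset_Icc_self ht)).hasDerivWithinAt) ha fun t ht => ?_
  rw [norm_mul, mul_comm K]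
  exact mul_le_mul_of_nonneg_left (hK t (Ico_subset_Icc_self ht)) (norm_nonneg _)

lemma eqOn_zero_of_hasDerivAt_mul (hI : I.OrdConnected) (ht₀ : t₀ ∈ I) (hg : ContinuousOn g I)
    (hf : ∀ t ∈ I, HasDerivAt f (f t * g t) t) (h₀ : f t₀ = 0) : EqOn f 0 I := by
  intro t ht
  rcases le_total t₀ t with h | h
  · have hsub := hI.out ht₀ ht
    exact eqOn_zero_Icc_of_hasDerivAt_mul (hg.mono hsub) (fun u hu => hf u (hsub hu)) h₀
      (right_mem_Icc.2 h)
  · have hneg : MapsTo Neg.neg (Icc (-t₀) (-t)) I := fun u hu =>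
      hI.out ht ht₀ ⟨le_neg.2 hu.2, neg_le.1 hu.1⟩
    have hrev : ∀ u ∈ Icc (-t₀) (-t),
        HasDerivAt (fun u => f (-u)) (f (-u) * -g (-u)) u := fun u hu =>
      ((hf (-u) (hneg hu)).comp u (hasDerivAt_neg u)).congr_deriv (by ring)
    simpa using eqOn_zero_Icc_of_hasDerivAt_mul ((hg.comp continuousOn_neg hneg).neg) hrev
      (by simpa using h₀) (right_mem_Icc.2 (neg_le_neg h))

lemma eq_add_mul_of_hasDerivAt (hI : I.OrdConnected) (ht₀ : t₀ ∈ I) {k : ℝ}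
    (hf : ∀ t ∈ I, HasDerivAt f k t) : ∀ t ∈ I, f t = f t₀ + k * (t - t₀) := by
  intro t ht
  have hline : ∀ u ∈ I, HasDerivWithinAt (fun u => f u - k * u) 0 I u := fun u hu =>
    ((hf u hu).sub ((hasDerivAt_id u).const_mul k)).hasDerivWithinAt.congr_deriv (by simp)
  have := hI.convex.norm_image_sub_le_of_norm_hasDerivWithin_le hline (fun _ _ => norm_zero.le)
    ht₀ ht
  rw [zero_mul, norm_le_zero_iff] at this
  linarith

end LinearODE

lemma radius_eq_of_hasDerivAt {rs c : ℝ} {β : (Fin 8 → ℝ) → ℝ} (hβ : ContDiffOn ℝ 1 β chartU)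
    {I : Set ℝ} (hI : I.OrdConnected) {t₀ : ℝ} (ht₀ : t₀ ∈ I) {X : ℝ → Fin 8 → ℝ}
    (hX : ContinuousOn X I) (hchart : ∀ s ∈ I, X s ∈ chartU)
    (hr : ∀ s ∈ I, HasDerivAt (fun s => X s 1) (pd 5 (Ham rs c β) (X s)) s)
    (hr₀ : X t₀ 1 = rs / 2) : ∀ s ∈ I, X s 1 = rs / 2 := by
  have hcoeff : ContinuousOn (fun s => fderiv ℝ β (X s) (Pi.single 5 1)) I :=
    ((hβ.continuousOn_fderiv_of_isOpen isOpen_chartU le_rfl).comp hX hchart).clm_apply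
      continuousOn_const
  intro s hs
  refine sub_eq_zero.1 (eqOn_zero_of_hasDerivAt_mul (f := fun u => X u 1 - rs / 2) hI ht₀ hcoeff
    (fun u hu => ?_) (sub_eq_zero.2 hr₀) hs)
  have hβu := (hβ.differentiableOn one_ne_zero).differentiableAt
    (isOpen_chartU.mem_nhds (hchart u hu))
  simpa only [pd_five_ham hβu] using (hr u hu).sub_const (rs / 2)

theorem horizon_bicharacteristics_general
    (rs c : ℝ) (hrs : 0 < rs)
    (β : (Fin 8 → ℝ) → ℝ) (hβ : ContDiffOn ℝ 1 β chartU)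
    (I : Set ℝ) (hI : I.OrdConnected) (h0 : (0 : ℝ) ∈ I)
    (γt γr γth γph γpt γpr γpth γpph : ℝ → ℝ)
    (X : ℝ → Fin 8 → ℝ)
    (hX : ∀ s, X s = ![γt s, γr s, γth s, γph s, γpt s, γpr s, γpth s, γpph s])
    (hchart : ∀ s ∈ I, X s ∈ chartU)
    (ht : ∀ s ∈ I, HasDerivAt γt (pd 4 (Ham rs c β) (X s)) s)
    (hr : ∀ s ∈ I, HasDerivAt γr (pd 5 (Ham rs c β) (X s)) s)
    (hth : ∀ s ∈ I, HasDerivAt γth (pd 6 (Ham rs c β) (X s)) s)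
    (hph : ∀ s ∈ I, HasDerivAt γph (pd 7 (Ham rs c β) (X s)) s)
    (hpt : ∀ s ∈ I, HasDerivAt γpt (-pd 0 (Ham rs c β) (X s)) s)
    (hpr : ∀ s ∈ I, HasDerivAt γpr (-pd 1 (Ham rs c β) (X s)) s)
    (hpth : ∀ s ∈ I, HasDerivAt γpth (-pd 2 (Ham rs c β) (X s)) s)
    (hpph : ∀ s ∈ I, HasDerivAt γpph (-pd 3 (Ham rs c β) (X s)) s)
    (hr0 : γr 0 = rs / 2) :
    ∀ s ∈ I,
      γr s = rs / 2 ∧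
      γth s = γth 0 ∧
      γt s = γt 0 + s ∧
      γph s = γph 0 + c / rs * s ∧
      γpt s = γpt 0 ∧
      γpth s = γpth 0 ∧
      γpph s = γpph 0 ∧
      (γpt 0 + c / rs * γpph 0 = 0 → γpt s + c / rs * γpph s = 0) := by
  have hX1 (s : ℝ) : X s 1 = γr s := by rw [hX]; rfl
  have cont {f f' : ℝ → ℝ} (hf : ∀ s ∈ I, HasDerivAt f (f' s) s) : ContinuousOn f I :=
    continuousOn_of_forall_continuousAt fun s hs => (hf s hs).continuousAt
  have hXcont : ContinuousOn X I := by
    refine continuousOn_pi.2 fun i => ?_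
    simp only [hX]
    fin_cases i
    exacts [cont ht, cont hr, cont hth, cont hph, cont hpt, cont hpr, cont hpth, cont hpph]
  have hon : ∀ s ∈ I, γr s = rs / 2 := by
    simpa only [hX1] using radius_eq_of_hasDerivAt hβ hI h0 hXcont hchart
      (by simpa only [hX1] using hr) (by rwa [hX1])
  have hflow (i : Fin 8) (hi : i ≠ 1) (s : ℝ) (hs : s ∈ I) :
      pd i (Ham rs c β) (X s) = horizonHamiltonian rs c (Pi.single i 1) :=
    pd_ham_of_horizon hrs.ne' ((hX1 s).trans (hon s hs)) hi
  have linear {f : ℝ → ℝ} {k : ℝ} (hf : ∀ s ∈ I, HasDerivAt f k s) :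
      ∀ s ∈ I, f s = f 0 + k * s := by
    simpa using eq_add_mul_of_hasDerivAt hI h0 hf
  have ht' := linear (k := 1) fun s hs => by simpa [hflow 4 (by decide) s hs] using ht s hs
  have hth' := linear (k := 0) fun s hs => by simpa [hflow 6 (by decide) s hs] using hth s hs
  have hph' := linear (k := c / rs) fun s hs => by simpa [hflow 7 (by decide) s hs] using hph s hs
  have hpt' := linear (k := 0) fun s hs => by simpa [hflow 0 (by decide) s hs] using hpt s hs
  have hpth' := linear (k := 0) fun s hs => by simpa [hflow 2 (by decide) s hs] using hpth s hs
  have hpph' := linear (k := 0) fun s hs => by simpa [hflow 3 (by decide) s hs] using hpph s hs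
  simp only [zero_mul, add_zero, one_mul] at ht' hth' hpt' hpth' hpph'
  intro s hs
  refine ⟨hon s hs, hth' s hs, ht' s hs, hph' s hs, hpt' s hs, hpth' s hs, hpph' s hs, ?_⟩
  rw [hpt' s hs, hpph' s hs]
  exact id

/-- a bicharacteristic curve of H = p_t + Ψ + (r − r_s/2)·β starting on the
extremal horizon stays on it, orbiting at constant angular velocity c/r_s with constant
t-speed 1, constant θ, p_t, p_θ, p_φ, and only p_r varying; if moreover
p_t(0) + (c/r_s)·p_φ(0) = 0, the curve remains in the double characteristic manifold Σ₂. -/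
theorem horizon_bicharacteristics
    (rs c : ℝ) (hrs : 0 < rs) (hc : 0 < c)
    (β : (Fin 8 → ℝ) → ℝ) (hβ : ContDiffOn ℝ 1 β chartU)
    (I : Set ℝ) (hI : I.OrdConnected) (h0 : (0 : ℝ) ∈ I)
    (γt γr γth γph γpt γpr γpth γpph : ℝ → ℝ)
    (X : ℝ → Fin 8 → ℝ)
    (hX : ∀ s, X s = ![γt s, γr s, γth s, γph s, γpt s, γpr s, γpth s, γpph s])
    (hchart : ∀ s ∈ I, X s ∈ chartU)
    (ht : ∀ s ∈ I, HasDerivAt γt (pd 4 (Ham rs c β) (X s)) s)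
    (hr : ∀ s ∈ I, HasDerivAt γr (pd 5 (Ham rs c β) (X s)) s)
    (hth : ∀ s ∈ I, HasDerivAt γth (pd 6 (Ham rs c β) (X s)) s)
    (hph : ∀ s ∈ I, HasDerivAt γph (pd 7 (Ham rs c β) (X s)) s)
    (hpt : ∀ s ∈ I, HasDerivAt γpt (-pd 0 (Ham rs c β) (X s)) s)
    (hpr : ∀ s ∈ I, HasDerivAt γpr (-pd 1 (Ham rs c β) (X s)) s)
    (hpth : ∀ s ∈ I, HasDerivAt γpth (-pd 2 (Ham rs c β) (X s)) s)
    (hpph : ∀ s ∈ I, HasDerivAt γpph (-pd 3 (Ham rs c β) (X s)) s)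
    (hr0 : γr 0 = rs / 2) :
    ∀ s ∈ I,
      γr s = rs / 2 ∧
      γth s = γth 0 ∧
      γt s = γt 0 + s ∧
      γph s = γph 0 + c / rs * s ∧
      γpt s = γpt 0 ∧
      γpth s = γpth 0 ∧
      γpph s = γpph 0 ∧
      (γpt 0 + c / rs * γpph 0 = 0 → γpt s + c / rs * γpph s = 0) :=
  horizon_bicharacteristics_general rs c hrs β hβ I hI h0 γt γr γth γph γpt γpr γpth γpph X hX
    hchart ht hr hth hph hpt hpr hpth hpph hr0
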